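/- Let {X_n} satisfy AIM(x_n) with separation sequence q_n and mixing coefficients α_n, suppose n·F̄(x_n) → τ > 0 as n → ∞ with F̄(x_n) > 0 for every n, and let (p_n) be a sequence of positive integers with p_n = o(n), n·α_n = o(p_n) and q_n = o(p_n). Set θ_{i,n} = P(M_{i,i+p_n} ≤ x_n | X_i > x_n), and suppose that for each i the limit θ_i = lim_{n→∞} θ_{i,n} exists, that max_{1≤i≤n} |θ_i − θ_{i,n}| → 0 as n → ∞, and that the Cesàro means (1/n) ∑_{i=1}^{n} θ_i converge to a limit γ. Then P(M_n ≤ x_n) → e^{−τγ} as n → ∞. -/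

import Mathlib

/-!
Split `{1, …, n}` into `k` blocks of length `r = m p` with `m = ⌊n / (k p)⌋`; fewer than `k p`
indices are left over. AIM across gaps of length `q` makes `P(Mₙ ≤ xₙ)` the product of the block
probabilities up to `k (αₙ + 2 q F̄)`. Inside a block `B`, decomposing by the last exceedance gives
`1 - P(M(B) ≤ u) = ∑_{j ∈ B} P(X_j > u, M_{j,end} ≤ u)`; cutting `B` into sub-blocks of length `p`
and using AIM once per sub-block replaces `M_{j,end}` by `M_{j,j+p}`, i.e. the sum by
`F̄ ∑_{j ∈ B} θ_{j,n}`, up to `(m p F̄)² + 2 m (αₙ + q F̄) + p F̄`. Then `1 - x ≈ e^{-x}` turns the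
product into `exp (-F̄ ∑_{j ≤ n} θ_{j,n})`, whose exponent tends to `τ γ` by the uniform
convergence and the Cesàro hypothesis. The total error is `o(1) + 2 τ² / k` with `k` arbitrary.
-/

open MeasureTheory Filter Finset Asymptotics

/-- Probability of an event as a real number. -/
noncomputable def pr {Ω : Type*} [MeasurableSpace Ω] (P : Measure Ω) (A : Set Ω) : ℝ :=
  (P A).toReal

/-- The event that `X i ≤ x` for every index `i` in the set `S`;
this is the event `{M(S) ≤ x}` where `M(S) = max {X i : i ∈ S}`. -/
def allLe {Ω : Type*} (X : ℕ → Ω → ℝ) (S : Set ℕ) (x : ℝ) : Set Ω :=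
  {ω | ∀ i ∈ S, X i ω ≤ x}

/-- `α` is a sequence of AIM mixing coefficients for `X` relative to thresholds `xs`
with separation sequence `q`: for any two intervals `I₁ = [a,b]`, `I₂ = [b+qₙ+1, c]`
contained in `{1,…,n}`, separated by `qₙ`, each of cardinality at least `qₙ`,
the maximum-based discrepancy is bounded by `α n`. -/
def AIMBound {Ω : Type*} [MeasurableSpace Ω] (P : Measure Ω) (X : ℕ → Ω → ℝ)
    (xs : ℕ → ℝ) (q : ℕ → ℕ) (α : ℕ → ℝ) : Prop :=
  ∀ n a b c : ℕ, 1 ≤ a → a ≤ b → b + q n + 1 ≤ c → c ≤ n →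
    q n ≤ b + 1 - a → q n ≤ c - (b + q n) →
    |pr P (allLe X (Set.Icc a b ∪ Set.Icc (b + q n + 1) c) (xs n)) -
      pr P (allLe X (Set.Icc a b) (xs n)) *
        pr P (allLe X (Set.Icc (b + q n + 1) c) (xs n))| ≤ α n

lemma abs_prod_sub_prod_le {ι : Type*} (s : Finset ι) {x y : ι → ℝ} (hx : ∀ i ∈ s, |x i| ≤ 1)
    (hy : ∀ i ∈ s, |y i| ≤ 1) :
    |∏ i ∈ s, x i - ∏ i ∈ s, y i| ≤ ∑ i ∈ s, |x i - y i| := by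
  classical
  induction s using Finset.induction_on with
  | empty => simp
  | insert a s ha ih =>
    simp only [Finset.mem_insert, forall_eq_or_imp] at hx hy
    rw [Finset.prod_insert ha, Finset.prod_insert ha, Finset.sum_insert ha]
    have hY : |∏ i ∈ s, y i| ≤ 1 := by
      rw [Finset.abs_prod]; exact Finset.prod_le_one (fun _ _ => abs_nonneg _) hy.2
    calc |x a * ∏ i ∈ s, x i - y a * ∏ i ∈ s, y i|
        = |x a * (∏ i ∈ s, x i - ∏ i ∈ s, y i) + (x a - y a) * ∏ i ∈ s, y i| := by ring_nf
      _ ≤ |x a| * |∏ i ∈ s, x i - ∏ i ∈ s, y i| + |x a - y a| * |∏ i ∈ s, y i| := by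
        rw [← abs_mul, ← abs_mul]; exact abs_add_le _ _
      _ ≤ 1 * ∑ i ∈ s, |x i - y i| + |x a - y a| * 1 := by
        gcongr
        exacts [hx.1, ih hx.2 hy.2]
      _ = _ := by ring

lemma abs_sub_exp_neg_le (x : ℝ) {c : ℝ} (hc : |c| ≤ 1) :
    |x - Real.exp (-c)| ≤ |(1 - x) - c| + c ^ 2 := by
  have h := Real.abs_exp_sub_one_sub_id_le (x := -c) (by rwa [abs_neg])
  rw [neg_sq] at h
  calc |x - Real.exp (-c)| = |((1 - x) - c) + (Real.exp (-c) - 1 - -c)| := by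
        rw [← abs_neg]; congr 1; ring
    _ ≤ _ := (abs_add_le _ _).trans (by linarith)

lemma exp_neg_sub_exp_neg_le {x y : ℝ} (hx : 0 ≤ x) (hxy : x ≤ y) :
    Real.exp (-x) - Real.exp (-y) ≤ y - x := by
  have h₁ := Real.one_sub_le_exp_neg (y - x)
  have h₂ : Real.exp (-y) = Real.exp (-x) * Real.exp (-(y - x)) := by
    rw [← Real.exp_add]; ring_nf
  have h₃ : Real.exp (-x) ≤ 1 := Real.exp_le_one_iff.2 (by linarith)
  rw [h₂]
  nlinarith [Real.exp_pos (-x)]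

lemma sum_Icc_add_one_consecutive {M : Type*} [AddCommMonoid M] (g : ℕ → M) {a b c : ℕ}
    (hab : a ≤ b) (hbc : b ≤ c) :
    ∑ i ∈ Icc (a + 1) c, g i = ∑ i ∈ Icc (a + 1) b, g i + ∑ i ∈ Icc (b + 1) c, g i := by
  simp only [Finset.Icc_add_one_left_eq_Ioc]
  exact (Finset.sum_Ioc_consecutive g hab hbc).symm

lemma sum_Icc_eq_sum_range_blocks {M : Type*} [AddCommMonoid M] (g : ℕ → M) (v m r : ℕ) :
    ∑ i ∈ Icc (v * r + 1) ((v + m) * r), g i =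
      ∑ s ∈ range m, ∑ i ∈ Icc ((v + s) * r + 1) ((v + s + 1) * r), g i := by
  induction m with
  | zero => simp
  | succ m ih =>
    rw [Finset.sum_range_succ, ← ih, ← add_assoc,
      sum_Icc_add_one_consecutive g (b := (v + m) * r) (Nat.mul_le_mul_right r (by omega))
        (Nat.mul_le_mul_right r (by omega))]

lemma pr_eq_measureReal {Ω : Type*} [MeasurableSpace Ω] (P : Measure Ω) (A : Set Ω) :
    pr P A = P.real A := rfl

section Events

variable {Ω : Type*} {X : ℕ → Ω → ℝ} {u : ℝ}

lemma allLe_union (S T : Set ℕ) : allLe X (S ∪ T) u = allLe X S u ∩ allLe X T u := by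
  ext ω; simp [allLe, or_imp, forall_and]

lemma allLe_anti {S T : Set ℕ} (h : S ⊆ T) : allLe X T u ⊆ allLe X S u :=
  fun _ hω i hi => hω i (h hi)

@[simp] lemma allLe_empty : allLe X ∅ u = Set.univ := by
  ext; simp [allLe]

lemma measurableSet_allLe [MeasurableSpace Ω] (hm : ∀ i, Measurable (X i)) (S : Set ℕ) :
    MeasurableSet (allLe X S u) := by
  have : allLe X S u = ⋂ i ∈ S, {ω | X i ω ≤ u} := by ext; simp [allLe]
  rw [this]
  exact .biInter S.to_countable fun i _ => measurableSet_le (hm i) measurable_const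

lemma exceed_inter_allLe_eq_sdiff (j : ℕ) (S : Set ℕ) :
    {ω | u < X j ω} ∩ allLe X S u = allLe X S u \ allLe X (insert j S) u := by
  ext ω
  simp only [allLe, Set.mem_inter_iff, Set.mem_sdiff, Set.mem_ofPred_eq, Set.mem_insert_iff,
    forall_eq_or_imp, ← not_le]
  tauto

end Events

section Measure

variable {Ω : Type*} [MeasurableSpace Ω] {P : Measure Ω} {X : ℕ → Ω → ℝ} {u f : ℝ}

/-- `P(X_j > u, M_{j,c} ≤ u)`; for `c = j + pₙ` and `u = xₙ` this is `F̄(xₙ) θ_{j,n}`. -/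
noncomputable def lastExceedProb (P : Measure Ω) (X : ℕ → Ω → ℝ) (u : ℝ) (j c : ℕ) : ℝ :=
  P.real ({ω | u < X j ω} ∩ allLe X (Set.Icc (j + 1) c) u)

lemma lastExceedProb_nonneg (j c : ℕ) : 0 ≤ lastExceedProb P X u j c := measureReal_nonneg

lemma measureReal_exceed_inter_allLe [IsFiniteMeasure P] (hm : ∀ i, Measurable (X i)) (j : ℕ)
    (S : Set ℕ) :
    P.real ({ω | u < X j ω} ∩ allLe X S u) =
      P.real (allLe X S u) - P.real (allLe X (insert j S) u) := by
  rw [exceed_inter_allLe_eq_sdiff,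
    measureReal_sdiff (allLe_anti (Set.subset_insert j S)) (measurableSet_allLe hm _)]

lemma sum_measureReal_exceed_inter_allLe [IsFiniteMeasure P] (hm : ∀ i, Measurable (X i))
    (T : Set ℕ) {a b c : ℕ} (hab : a ≤ b) (hbc : b ≤ c) :
    ∑ j ∈ Icc a b, P.real ({ω | u < X j ω} ∩ allLe X (Set.Icc (j + 1) c ∪ T) u) =
      P.real (allLe X (Set.Icc (b + 1) c ∪ T) u) - P.real (allLe X (Set.Icc a c ∪ T) u) := by
  rw [← Finset.sum_Icc_sub hab (fun j => P.real (allLe X (Set.Icc j c ∪ T) u))]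
  refine Finset.sum_congr rfl fun j hj => ?_
  have hjc : j ≤ c := ((Finset.mem_Icc.1 hj).2).trans hbc
  rw [measureReal_exceed_inter_allLe hm, ← Set.insert_union, Set.insert_Icc_add_one_left_eq_Icc hjc]

lemma abs_measureReal_allLe_union_sub_le [IsFiniteMeasure P] (hm : ∀ i, Measurable (X i))
    (hf : ∀ i, 1 ≤ i → P.real {ω | u < X i ω} ≤ f) (S : Set ℕ) {T : Finset ℕ}
    (hT : ∀ i ∈ T, 1 ≤ i) :
    |P.real (allLe X (S ∪ T) u) - P.real (allLe X S u)| ≤ #T * f := by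
  have hsub : allLe X (S ∪ T) u ⊆ allLe X S u := allLe_anti Set.subset_union_left
  rw [abs_sub_comm, abs_of_nonneg (sub_nonneg.2 (measureReal_mono hsub)),
    ← measureReal_sdiff hsub (measurableSet_allLe hm _)]
  calc P.real (allLe X S u \ allLe X (S ∪ T) u)
      ≤ P.real (⋃ i ∈ T, {ω | u < X i ω}) := by
        refine measureReal_mono (fun ω ⟨hS, hST⟩ => ?_) (measure_ne_top P _)
        simp only [Set.mem_iUnion, Set.mem_ofPred_eq, exists_prop]
        by_contra! h
        exact hST fun i hi => hi.elim (hS i) (h i)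
    _ ≤ ∑ i ∈ T, P.real {ω | u < X i ω} := measureReal_biUnion_finset_le _ _
    _ ≤ #T * f := by simpa using Finset.sum_le_card_nsmul T _ f fun i hi => hf i (hT i hi)

lemma abs_measureReal_allLe_union_Icc_sub_le [IsFiniteMeasure P] (hm : ∀ i, Measurable (X i))
    (hf : ∀ i, 1 ≤ i → P.real {ω | u < X i ω} ≤ f) (S : Set ℕ) {a b : ℕ} (ha : 1 ≤ a) :
    |P.real (allLe X (S ∪ Set.Icc a b) u) - P.real (allLe X S u)| ≤ (b + 1 - a : ℕ) * f := by
  have h := abs_measureReal_allLe_union_sub_le hm hf S (T := Icc a b)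
    fun i hi => ha.trans (Finset.mem_Icc.1 hi).1
  rwa [Finset.coe_Icc, Nat.card_Icc] at h

lemma lastExceedProb_le [IsFiniteMeasure P] (hf : ∀ i, 1 ≤ i → P.real {ω | u < X i ω} ≤ f)
    {j : ℕ} (hj : 1 ≤ j) (c : ℕ) : lastExceedProb P X u j c ≤ f :=
  (measureReal_mono Set.inter_subset_left).trans (hf j hj)

lemma lastExceedProb_anti [IsFiniteMeasure P] {j c c' : ℕ} (h : c ≤ c') :
    lastExceedProb P X u j c' ≤ lastExceedProb P X u j c :=
  measureReal_mono (Set.inter_subset_inter_right _ (allLe_anti (Set.Icc_subset_Icc_right h)))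

lemma abs_lastExceedProb_sub_le [IsFiniteMeasure P]
    (hf : ∀ i, 1 ≤ i → P.real {ω | u < X i ω} ≤ f) {j : ℕ} (hj : 1 ≤ j) (c c' : ℕ) :
    |lastExceedProb P X u j c - lastExceedProb P X u j c'| ≤ f :=
  abs_sub_le_of_nonneg_of_le (lastExceedProb_nonneg j c) (lastExceedProb_le hf hj c)
    (lastExceedProb_nonneg j c') (lastExceedProb_le hf hj c')

lemma one_sub_measureReal_allLe_eq_sum [IsProbabilityMeasure P] (hm : ∀ i, Measurable (X i))
    {a c : ℕ} (hac : a ≤ c) :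
    1 - P.real (allLe X (Set.Icc a c) u) = ∑ j ∈ Icc a c, lastExceedProb P X u j c := by
  simpa [lastExceedProb] using (sum_measureReal_exceed_inter_allLe (P := P) hm ∅ hac le_rfl).symm

/-- The window `[j+1, j+p]` reaches the block `[d, c]`, so an exceedance in `[j+1, c]` that the
window misses lies in `[d, c]`. -/
lemma lastExceedProb_sub_le [IsFiniteMeasure P] (hm : ∀ i, Measurable (X i)) {j p b d c : ℕ}
    (hb : b ≤ j + p) (hd : d ≤ j + p + 1) :
    lastExceedProb P X u j (j + p) - lastExceedProb P X u j c ≤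
      P.real ({ω | u < X j ω} ∩ allLe X (Set.Icc (j + 1) b) u) -
        P.real ({ω | u < X j ω} ∩ allLe X (Set.Icc (j + 1) b ∪ Set.Icc d c) u) := by
  set W := {ω | u < X j ω} ∩ allLe X (Set.Icc (j + 1) (j + p)) u
  set E := {ω | u < X j ω} ∩ allLe X (Set.Icc (j + 1) b) u
  set B := allLe X (Set.Icc d c) u
  have hB : MeasurableSet B := measurableSet_allLe hm _
  have hWB : W ∩ B ⊆ {ω | u < X j ω} ∩ allLe X (Set.Icc (j + 1) c) u :=
    fun ω ⟨⟨hj, hW⟩, hB⟩ => ⟨hj, fun i hi => if h : i ≤ j + p then hW i ⟨hi.1, h⟩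
      else hB i ⟨by omega, hi.2⟩⟩
  have hWE : W \ B ⊆ E \ B :=
    Set.sdiff_subset_sdiff_left <|
      Set.inter_subset_inter_right _ (allLe_anti (Set.Icc_subset_Icc_right hb))
  rw [allLe_union, ← Set.inter_assoc]
  have hW := measureReal_inter_add_sdiff (μ := P) (s := W) hB
  have hE := measureReal_inter_add_sdiff (μ := P) (s := E) hB
  have h₁ := measureReal_mono (μ := P) hWB
  have h₂ := measureReal_mono (μ := P) hWE
  unfold lastExceedProb
  linarith

end Measure

section Blocks

variable {Ω : Type*} [MeasurableSpace Ω]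

def AIMAt (P : Measure Ω) (X : ℕ → Ω → ℝ) (u : ℝ) (n q : ℕ) (A : ℝ) : Prop :=
  ∀ a b c : ℕ, 1 ≤ a → a ≤ b → b + q + 1 ≤ c → c ≤ n → q ≤ b + 1 - a → q ≤ c - (b + q) →
    |P.real (allLe X (Set.Icc a b ∪ Set.Icc (b + q + 1) c) u) -
      P.real (allLe X (Set.Icc a b) u) * P.real (allLe X (Set.Icc (b + q + 1) c) u)| ≤ A

lemma AIMBound.aimAt {P : Measure Ω} {X : ℕ → Ω → ℝ} {xs : ℕ → ℝ} {q : ℕ → ℕ} {α : ℕ → ℝ}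
    (h : AIMBound P X xs q α) (n : ℕ) : AIMAt P X (xs n) n (q n) |α n| :=
  fun a b c h₁ h₂ h₃ h₄ h₅ h₆ => (h n a b c h₁ h₂ h₃ h₄ h₅ h₆).trans (le_abs_self _)

variable {P : Measure Ω} [IsProbabilityMeasure P] {X : ℕ → Ω → ℝ} {u f A : ℝ} {n q p : ℕ}

/-- By `lastExceedProb_sub_le` the sum is at most `P(E \ B)`, where `E` says that `[a, b+q]`
has an exceedance but `[b+1, b+q]` has none and `B` that `[b+2q+1, c]` has none; AIM across the
gap `[b+q+1, b+2q]` makes `P(E \ B)` almost `P(E) P(Bᶜ)`. -/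
lemma sum_lastExceedProb_sub_le (hm : ∀ i, Measurable (X i))
    (hf : ∀ i, 1 ≤ i → P.real {ω | u < X i ω} ≤ f) (haim : AIMAt P X u n q A) (hq : 1 ≤ q)
    {a b c : ℕ} (ha : 1 ≤ a) (hab : a ≤ b) (hwin : b + 2 * q ≤ a + p) (hc : b + 3 * q ≤ c)
    (hcn : c ≤ n) :
    ∑ j ∈ Icc a b, (lastExceedProb P X u j (j + p) - lastExceedProb P X u j c) ≤
      (b + 1 - a : ℕ) * f * ((c - (b + 2 * q) : ℕ) * f) + 2 * A := by
  set I₂ := Set.Icc (b + q + q + 1) c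
  set G := fun x => P.real (allLe X (Set.Icc x (b + q)) u)
  set H := fun x => P.real (allLe X (Set.Icc x (b + q) ∪ I₂) u)
  set π := P.real (allLe X I₂ u)
  have hsum : ∑ j ∈ Icc a b, (lastExceedProb P X u j (j + p) - lastExceedProb P X u j c) ≤
      (G (b + 1) - G a) - (H (b + 1) - H a) := by
    have hG := sum_measureReal_exceed_inter_allLe (P := P) (u := u) hm ∅ hab (c := b + q)
      (by omega)
    have hH := sum_measureReal_exceed_inter_allLe (P := P) (u := u) hm I₂ hab (c := b + q)
      (by omega)
    simp only [Set.union_empty] at hG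
    rw [← hG, ← hH, ← Finset.sum_sub_distrib]
    refine Finset.sum_le_sum fun j hj => ?_
    have := Finset.mem_Icc.1 hj
    exact lastExceedProb_sub_le hm (by omega) (by omega)
  have haim_a : |H a - G a * π| ≤ A :=
    haim a (b + q) c ha (by omega) (by omega) hcn (by omega) (by omega)
  have haim_b : |H (b + 1) - G (b + 1) * π| ≤ A :=
    haim (b + 1) (b + q) c (by omega) (by omega) (by omega) hcn (by omega) (by omega)
  have hG : |G a - G (b + 1)| ≤ (b + 1 - a : ℕ) * f := by
    have h := abs_measureReal_allLe_union_Icc_sub_le (P := P) hm hf (Set.Icc (b + 1) (b + q))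
      (b := b) ha
    rwa [show Set.Icc (b + 1) (b + q) ∪ Set.Icc a b = Set.Icc a (b + q) by
      ext i; simp only [Set.mem_union, Set.mem_Icc]; omega] at h
  have hπ : |π - 1| ≤ (c - (b + 2 * q) : ℕ) * f := by
    have h := abs_measureReal_allLe_union_Icc_sub_le (P := P) hm hf ∅ (b := c)
      (show 1 ≤ b + q + q + 1 by omega)
    rwa [Set.empty_union, allLe_empty, probReal_univ,
      show c + 1 - (b + q + q + 1) = c - (b + 2 * q) by omega] at h
  have hGmono : G a ≤ G (b + 1) :=
    measureReal_mono (allLe_anti (Set.Icc_subset_Icc_left (by omega)))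
  have hπ1 : π ≤ 1 := measureReal_le_one
  rw [abs_sub_comm, abs_of_nonneg (by linarith)] at hG hπ
  calc _ ≤ (G (b + 1) - G a) - (H (b + 1) - H a) := hsum
    _ ≤ (G (b + 1) - G a) * (1 - π) + 2 * A := by
      nlinarith [abs_le.1 haim_a, abs_le.1 haim_b]
    _ ≤ (b + 1 - a : ℕ) * f * ((c - (b + 2 * q) : ℕ) * f) + 2 * A := by
      gcongr
      linarith

lemma abs_sum_lastExceedProb_sub_le_card (hf : ∀ i, 1 ≤ i → P.real {ω | u < X i ω} ≤ f)
    {a b : ℕ} (ha : 1 ≤ a) (c c' : ℕ → ℕ) :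
    |∑ j ∈ Icc a b, (lastExceedProb P X u j (c j) - lastExceedProb P X u j (c' j))| ≤
      (b + 1 - a : ℕ) * f := by
  refine (abs_sum_le_sum_abs _ _).trans ?_
  simpa using Finset.sum_le_card_nsmul _ _ f fun j hj =>
    abs_lastExceedProb_sub_le hf (ha.trans (Finset.mem_Icc.1 hj).1) _ _

/-- On the first `p - 2q` indices of a sub-block of length `p` the window `[j+1, j+p]` leaves a
gap of `q` before the rest of `[1, c]`, so `sum_lastExceedProb_sub_le` applies there; the last
`2q` indices are bounded crudely. -/
lemma abs_sum_lastExceedProb_sub_le (hm : ∀ i, Measurable (X i))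
    (hf : ∀ i, 1 ≤ i → P.real {ω | u < X i ω} ≤ f) (haim : AIMAt P X u n q A) (hq : 1 ≤ q)
    (hqp : 2 * q + 1 ≤ p) {t c : ℕ} (htc : (t + 2) * p ≤ c) (hcn : c ≤ n) :
    |∑ j ∈ Icc (t * p + 1) ((t + 1) * p),
        (lastExceedProb P X u j c - lastExceedProb P X u j (j + p))| ≤
      p * f * ((c - (t + 1) * p : ℕ) * f) + 2 * A + 2 * q * f := by
  have hf0 : 0 ≤ f := measureReal_nonneg.trans (hf 1 le_rfl)
  have e₁ : (t + 1) * p = t * p + p := by ring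
  have e₂ : (t + 2) * p = t * p + p + p := by ring
  set b := (t + 1) * p - 2 * q
  rw [sum_Icc_add_one_consecutive _ (b := b) (by omega) (by omega)]
  have hcore := sum_lastExceedProb_sub_le (p := p) hm hf haim hq (a := t * p + 1) (b := b)
    (c := c) (by omega) (by omega) (by omega) (by omega) hcn
  have hcore₀ : 0 ≤ ∑ j ∈ Icc (t * p + 1) b,
      (lastExceedProb P X u j (j + p) - lastExceedProb P X u j c) :=
    Finset.sum_nonneg fun j hj => sub_nonneg.2 <| lastExceedProb_anti <| by
      have := Finset.mem_Icc.1 hj; omega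
  have htail := abs_sum_lastExceedProb_sub_le_card hf (a := b + 1) (b := (t + 1) * p) (by omega)
    (fun _ => c) (· + p)
  rw [show (t + 1) * p + 1 - (b + 1) = 2 * q by omega] at htail
  rw [show c - (b + 2 * q) = c - (t + 1) * p by omega] at hcore
  have hlen : ((b + 1 - (t * p + 1) : ℕ) : ℝ) ≤ p := by exact_mod_cast (by omega)
  have hlen' : ((b + 1 - (t * p + 1) : ℕ) : ℝ) * f * ((c - (t + 1) * p : ℕ) * f) ≤
      p * f * ((c - (t + 1) * p : ℕ) * f) := by gcongr
  have hneg : ∑ j ∈ Icc (t * p + 1) b, (lastExceedProb P X u j c - lastExceedProb P X u j (j + p)) =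
      -∑ j ∈ Icc (t * p + 1) b, (lastExceedProb P X u j (j + p) - lastExceedProb P X u j c) := by
    simp
  rw [hneg]
  refine (abs_add_le _ _).trans ?_
  rw [abs_neg, abs_of_nonneg hcore₀]
  push_cast at htail
  linarith

lemma abs_one_sub_measureReal_allLe_sub_sum_le (hm : ∀ i, Measurable (X i))
    (hf : ∀ i, 1 ≤ i → P.real {ω | u < X i ω} ≤ f) (haim : AIMAt P X u n q A) (hA : 0 ≤ A)
    (hq : 1 ≤ q) (hqp : 2 * q + 1 ≤ p) {v m : ℕ} (hm₁ : 1 ≤ m) (hvn : (v + m) * p ≤ n) :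
    |(1 - P.real (allLe X (Set.Icc (v * p + 1) ((v + m) * p)) u)) -
        ∑ j ∈ Icc (v * p + 1) ((v + m) * p), lastExceedProb P X u j (j + p)| ≤
      (m * p * f) ^ 2 + 2 * m * (A + q * f) + p * f := by
  have hf0 : 0 ≤ f := measureReal_nonneg.trans (hf 1 le_rfl)
  obtain ⟨m, rfl⟩ : ∃ m', m = m' + 1 := ⟨m - 1, by omega⟩
  have hvp : v * p + 1 ≤ (v + (m + 1)) * p := by nlinarith
  rw [one_sub_measureReal_allLe_eq_sum hm hvp, ← Finset.sum_sub_distrib,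
    sum_Icc_eq_sum_range_blocks, Finset.sum_range_succ]
  have hfull : ∀ s ∈ range m,
      |∑ j ∈ Icc ((v + s) * p + 1) ((v + s + 1) * p),
          (lastExceedProb P X u j ((v + (m + 1)) * p) - lastExceedProb P X u j (j + p))| ≤
        p * f * ((m + 1) * p * f) + 2 * A + 2 * q * f := by
    intro s hs
    have hs := Finset.mem_range.1 hs
    refine (abs_sum_lastExceedProb_sub_le hm hf haim hq hqp
      (Nat.mul_le_mul_right p (by omega)) hvn).trans ?_
    have : ((v + (m + 1)) * p - (v + s + 1) * p : ℕ) ≤ (m + 1) * p := by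
      rw [← Nat.sub_mul]; exact Nat.mul_le_mul_right p (by omega)
    have : (((v + (m + 1)) * p - (v + s + 1) * p : ℕ) : ℝ) * f ≤ (m + 1) * p * f := by
      gcongr; exact_mod_cast this
    gcongr
  have hlast := abs_sum_lastExceedProb_sub_le_card (P := P) (X := X) (u := u) hf
    (a := (v + m) * p + 1) (b := (v + m + 1) * p) (by omega)
    (fun _ => (v + (m + 1)) * p) (· + p)
  rw [show (v + m + 1) * p + 1 - ((v + m) * p + 1) = p by rw [add_mul]; omega] at hlast
  calc _ ≤ ∑ s ∈ range m, |∑ j ∈ Icc ((v + s) * p + 1) ((v + s + 1) * p),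
          (lastExceedProb P X u j ((v + (m + 1)) * p) - lastExceedProb P X u j (j + p))| +
        p * f :=
        (abs_add_le _ _).trans (add_le_add (abs_sum_le_sum_abs _ _) hlast)
    _ ≤ m * (p * f * ((m + 1) * p * f) + 2 * A + 2 * q * f) + p * f := by
      grw [Finset.sum_le_sum hfull, Finset.sum_const, Finset.card_range, nsmul_eq_mul]
    _ ≤ _ := by push_cast; nlinarith [mul_nonneg hf0 (Nat.cast_nonneg (α := ℝ) p),
      mul_nonneg hf0 (Nat.cast_nonneg (α := ℝ) q), Nat.cast_nonneg (α := ℝ) m]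

lemma abs_measureReal_allLe_sub_mul_le (hm : ∀ i, Measurable (X i))
    (hf : ∀ i, 1 ≤ i → P.real {ω | u < X i ω} ≤ f) (haim : AIMAt P X u n q A) (hA : 0 ≤ A)
    {r w : ℕ} (hqr : 2 * q + 1 ≤ r) (hwn : (w + 1) * r ≤ n) :
    |P.real (allLe X (Set.Icc 1 ((w + 1) * r)) u) -
        P.real (allLe X (Set.Icc 1 (w * r)) u) *
          P.real (allLe X (Set.Icc (w * r + 1) ((w + 1) * r)) u)| ≤ A + 2 * q * f := by
  have hf0 : 0 ≤ f := measureReal_nonneg.trans (hf 1 le_rfl)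
  rcases Nat.eq_zero_or_pos w with rfl | hw
  · simp only [zero_mul, zero_add, one_mul, Set.Icc_eq_empty_of_lt one_pos, allLe_empty,
      probReal_univ, sub_self, abs_zero]
    positivity
  have e : (w + 1) * r = w * r + r := by ring
  have hwr : r ≤ w * r := Nat.le_mul_of_pos_left r hw
  set I₁ := Set.Icc 1 (w * r)
  set I₂ := Set.Icc (w * r + q + 1) ((w + 1) * r)
  have h₁ := abs_measureReal_allLe_union_Icc_sub_le (P := P) hm hf (I₁ ∪ I₂)
    (b := w * r + q) (Nat.le_add_left 1 (w * r))
  have h₂ := abs_measureReal_allLe_union_Icc_sub_le (P := P) hm hf I₂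
    (b := w * r + q) (Nat.le_add_left 1 (w * r))
  rw [show I₁ ∪ I₂ ∪ Set.Icc (w * r + 1) (w * r + q) = Set.Icc 1 ((w + 1) * r) by
      ext; simp only [I₁, I₂, Set.mem_union, Set.mem_Icc]; omega,
    show w * r + q + 1 - (w * r + 1) = q by omega] at h₁
  rw [show I₂ ∪ Set.Icc (w * r + 1) (w * r + q) = Set.Icc (w * r + 1) ((w + 1) * r) by
      ext; simp only [I₂, Set.mem_union, Set.mem_Icc]; omega,
    show w * r + q + 1 - (w * r + 1) = q by omega, abs_sub_comm] at h₂
  have h₃ := haim 1 (w * r) ((w + 1) * r) le_rfl (by omega) (by omega) hwn (by omega) (by omega)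
  have h₄ : |P.real (allLe X I₁ u) * P.real (allLe X I₂ u) -
      P.real (allLe X I₁ u) * P.real (allLe X (Set.Icc (w * r + 1) ((w + 1) * r)) u)| ≤ q * f := by
    rw [← mul_sub, abs_mul, abs_of_nonneg measureReal_nonneg]
    exact (mul_le_of_le_one_left (abs_nonneg _) measureReal_le_one).trans h₂
  have := abs_sub_le (P.real (allLe X (Set.Icc 1 ((w + 1) * r)) u)) (P.real (allLe X (I₁ ∪ I₂) u))
    (P.real (allLe X I₁ u) * P.real (allLe X (Set.Icc (w * r + 1) ((w + 1) * r)) u))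
  have := abs_sub_le (P.real (allLe X (I₁ ∪ I₂) u)) (P.real (allLe X I₁ u) * P.real (allLe X I₂ u))
    (P.real (allLe X I₁ u) * P.real (allLe X (Set.Icc (w * r + 1) ((w + 1) * r)) u))
  linarith

lemma abs_measureReal_allLe_sub_prod_le (hm : ∀ i, Measurable (X i))
    (hf : ∀ i, 1 ≤ i → P.real {ω | u < X i ω} ≤ f) (haim : AIMAt P X u n q A) (hA : 0 ≤ A)
    {r k : ℕ} (hqr : 2 * q + 1 ≤ r) (hkn : k * r ≤ n) :
    |P.real (allLe X (Set.Icc 1 (k * r)) u) -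
        ∏ s ∈ range k, P.real (allLe X (Set.Icc (s * r + 1) ((s + 1) * r)) u)| ≤
      k * (A + 2 * q * f) := by
  induction k with
  | zero => simp
  | succ k ih =>
    rw [Finset.prod_range_succ]
    have hstep := abs_measureReal_allLe_sub_mul_le hm hf haim hA hqr hkn
    have ih := ih ((Nat.mul_le_mul_right r k.le_succ).trans hkn)
    set b := P.real (allLe X (Set.Icc (k * r + 1) ((k + 1) * r)) u)
    have hb : |b| ≤ 1 := by rw [abs_of_nonneg measureReal_nonneg]; exact measureReal_le_one
    calc _ ≤ |P.real (allLe X (Set.Icc 1 ((k + 1) * r)) u) -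
            P.real (allLe X (Set.Icc 1 (k * r)) u) * b| +
          |P.real (allLe X (Set.Icc 1 (k * r)) u) * b -
            (∏ s ∈ range k, P.real (allLe X (Set.Icc (s * r + 1) ((s + 1) * r)) u)) * b| :=
          abs_sub_le _ _ _
      _ ≤ (A + 2 * q * f) + k * (A + 2 * q * f) := by
          rw [← sub_mul, abs_mul]
          exact add_le_add hstep ((mul_le_of_le_one_right (abs_nonneg _) hb).trans ih)
      _ = _ := by push_cast; ring

lemma abs_prod_measureReal_allLe_sub_exp_le (hm : ∀ i, Measurable (X i))
    (hf : ∀ i, 1 ≤ i → P.real {ω | u < X i ω} ≤ f) (haim : AIMAt P X u n q A) (hA : 0 ≤ A)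
    (hq : 1 ≤ q) (hqp : 2 * q + 1 ≤ p) {k m : ℕ} (hm₁ : 1 ≤ m) (hkn : k * (m * p) ≤ n)
    (hmpf : m * p * f ≤ 1) :
    |∏ s ∈ range k, P.real (allLe X (Set.Icc (s * (m * p) + 1) ((s + 1) * (m * p))) u) -
        Real.exp (-∑ j ∈ Icc 1 (k * (m * p)), lastExceedProb P X u j (j + p))| ≤
      k * (2 * (m * p * f) ^ 2 + 2 * m * (A + q * f) + p * f) := by
  set c := fun s => ∑ j ∈ Icc (s * (m * p) + 1) ((s + 1) * (m * p)), lastExceedProb P X u j (j + p)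
  have hsum : ∑ j ∈ Icc 1 (k * (m * p)), lastExceedProb P X u j (j + p) = ∑ s ∈ range k, c s := by
    simpa using sum_Icc_eq_sum_range_blocks (fun j => lastExceedProb P X u j (j + p)) 0 k (m * p)
  have hc₀ : ∀ s, 0 ≤ c s := fun s => Finset.sum_nonneg fun j _ => lastExceedProb_nonneg j _
  have hc : ∀ s, c s ≤ m * p * f := fun s => by
    refine (Finset.sum_le_card_nsmul _ _ f fun j hj => lastExceedProb_le hf ?_ _).trans ?_
    · have := (Finset.mem_Icc.1 hj).1; omega
    · rw [Nat.card_Icc, nsmul_eq_mul, show (s + 1) * (m * p) + 1 - (s * (m * p) + 1) = m * p by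
        rw [add_mul]; omega]
      push_cast; rfl
  rw [hsum, ← Finset.sum_neg_distrib, Real.exp_sum]
  refine (abs_prod_sub_prod_le _ (fun s _ => by
      rw [abs_of_nonneg measureReal_nonneg]; exact measureReal_le_one)
    (fun s _ => by
      rw [abs_of_pos (Real.exp_pos _)]
      exact Real.exp_le_one_iff.2 (neg_nonpos.2 (hc₀ s)))).trans ?_
  refine (Finset.sum_le_card_nsmul (range k) _
    (2 * (m * p * f) ^ 2 + 2 * m * (A + q * f) + p * f) fun s hs => ?_).trans
    (by rw [Finset.card_range, nsmul_eq_mul])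
  have hblock := abs_one_sub_measureReal_allLe_sub_sum_le hm hf haim hA hq hqp (v := s * m) hm₁
    (by rw [show (s * m + m) * p = (s + 1) * (m * p) by ring]
        exact (Nat.mul_le_mul_right _ (Finset.mem_range.1 hs)).trans hkn)
  rw [show s * m * p = s * (m * p) by ring, show (s * m + m) * p = (s + 1) * (m * p) by ring]
    at hblock
  refine (abs_sub_exp_neg_le _ ((abs_of_nonneg (hc₀ s)).trans_le ((hc s).trans hmpf))).trans ?_
  have : c s ^ 2 ≤ (m * p * f) ^ 2 := pow_le_pow_left₀ (hc₀ s) (hc s) 2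
  linarith

lemma abs_measureReal_allLe_sub_exp_le_of_blocks (hm : ∀ i, Measurable (X i))
    (hf : ∀ i, 1 ≤ i → P.real {ω | u < X i ω} ≤ f) (haim : AIMAt P X u n q A) (hA : 0 ≤ A)
    (hq : 1 ≤ q) (hqp : 2 * q + 1 ≤ p) {k m : ℕ} (hm₁ : 1 ≤ m) (hkn : k * (m * p) ≤ n)
    (hmpf : m * p * f ≤ 1) :
    |P.real (allLe X (Set.Icc 1 n) u) - Real.exp (-∑ j ∈ Icc 1 n, lastExceedProb P X u j (j + p))| ≤
      2 * (n - k * (m * p) : ℕ) * f + k * (A + 2 * q * f) +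
        k * (2 * (m * p * f) ^ 2 + 2 * m * (A + q * f) + p * f) := by
  have hfac := abs_measureReal_allLe_sub_prod_le hm hf haim hA
    (hqp.trans (Nat.le_mul_of_pos_left p hm₁)) hkn
  have hprod := abs_prod_measureReal_allLe_sub_exp_le hm hf haim hA hq hqp hm₁ hkn hmpf
  set r := m * p
  set h := fun j => lastExceedProb P X u j (j + p)
  have hP := abs_measureReal_allLe_union_Icc_sub_le (P := P) hm hf (Set.Icc 1 (k * r)) (b := n)
    (Nat.le_add_left 1 (k * r))
  rw [show Set.Icc 1 (k * r) ∪ Set.Icc (k * r + 1) n = Set.Icc 1 n by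
      ext; simp only [Set.mem_union, Set.mem_Icc]; omega,
    show n + 1 - (k * r + 1) = n - k * r by omega] at hP
  have hsplit := sum_Icc_add_one_consecutive h (Nat.zero_le _) hkn
  rw [zero_add] at hsplit
  have htail : ∑ j ∈ Icc (k * r + 1) n, h j ≤ (n - k * r : ℕ) * f := by
    refine (Finset.sum_le_card_nsmul _ _ f fun j hj =>
      lastExceedProb_le hf (by have := (Finset.mem_Icc.1 hj).1; omega) _).trans ?_
    rw [Nat.card_Icc, nsmul_eq_mul, show n + 1 - (k * r + 1) = n - k * r by omega]
  have hh₀ : ∀ s : Finset ℕ, 0 ≤ ∑ j ∈ s, h j := fun s =>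
    Finset.sum_nonneg fun j _ => lastExceedProb_nonneg j _
  have hle : ∑ j ∈ Icc 1 (k * r), h j ≤ ∑ j ∈ Icc 1 n, h j := by
    rw [hsplit]; exact le_add_of_nonneg_right (hh₀ _)
  have hexp := exp_neg_sub_exp_neg_le (hh₀ _) hle
  have hexp_mono := Real.exp_le_exp.2 (neg_le_neg hle)
  rw [abs_sub_comm] at hP
  rw [abs_le] at hP hfac hprod ⊢
  constructor <;> linarith [hP, hfac, hprod]

lemma abs_measureReal_allLe_sub_exp_le (hm : ∀ i, Measurable (X i))
    (hf : ∀ i, 1 ≤ i → P.real {ω | u < X i ω} ≤ f) (haim : AIMAt P X u n q A) (hA : 0 ≤ A)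
    (hq : 1 ≤ q) (hqp : 2 * q + 1 ≤ p) {k : ℕ} (hk : 1 ≤ k) (hkn : k * p ≤ n) (hnf : n * f ≤ k) :
    |P.real (allLe X (Set.Icc 1 n) u) - Real.exp (-∑ j ∈ Icc 1 n, lastExceedProb P X u j (j + p))| ≤
      5 * k * p * f + 3 * n * A / p + 2 * q * n * f / p + 2 * (n * f) ^ 2 / k := by
  have hf0 : 0 ≤ f := measureReal_nonneg.trans (hf 1 le_rfl)
  have hkp : 0 < k * p := Nat.mul_pos hk (by omega)
  set m := n / (k * p)
  have hm₁ : 1 ≤ m := (Nat.le_div_iff_mul_le hkp).2 (by simpa using hkn)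
  have hkmp : k * (m * p) ≤ n := by
    rw [mul_left_comm]; exact Nat.div_mul_le_self n (k * p)
  have hrem : n - k * (m * p) ≤ k * p := by
    have : n < m * (k * p) + k * p := Nat.lt_div_mul_add hkp
    have e : k * (m * p) = m * (k * p) := by ring
    omega
  have hp0 : (0 : ℝ) < p := by exact_mod_cast (show 0 < p by omega)
  have hk0 : (0 : ℝ) < k := by exact_mod_cast hk
  have hkmpR : (k : ℝ) * (m * p) ≤ n := by exact_mod_cast hkmp
  have hremR : ((n - k * (m * p) : ℕ) : ℝ) ≤ k * p := by exact_mod_cast hrem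
  have hqpR : (q : ℝ) ≤ p := by exact_mod_cast (show q ≤ p by omega)
  have hm₁R : (1 : ℝ) ≤ m := by exact_mod_cast hm₁
  have hkmpf : k * (m * p * f) ≤ n * f := by nlinarith
  have hmpf : m * p * f ≤ 1 :=
    le_of_mul_le_mul_left (by rw [mul_one]; exact hkmpf.trans hnf) hk0
  refine (abs_measureReal_allLe_sub_exp_le_of_blocks hm hf haim hA hq hqp hm₁ hkmp hmpf).trans ?_
  have hA' : (k : ℝ) * m * A ≤ n * A / p := by
    rw [le_div_iff₀ hp0]; nlinarith [mul_le_mul_of_nonneg_right hkmpR hA]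
  have hqf' : (k : ℝ) * m * q * f ≤ q * n * f / p := by
    rw [le_div_iff₀ hp0]
    nlinarith [mul_le_mul_of_nonneg_right hkmpR (mul_nonneg (Nat.cast_nonneg (α := ℝ) q) hf0)]
  have hsq : (k : ℝ) * (m * p * f) ^ 2 ≤ (n * f) ^ 2 / k := by
    rw [le_div_iff₀ hk0]
    nlinarith [pow_le_pow_left₀ (by positivity) hkmpf 2]
  have hkA : (k : ℝ) * A ≤ k * m * A := by
    nlinarith [mul_le_mul_of_nonneg_left hm₁R (mul_nonneg hk0.le hA)]
  have hkq : (k : ℝ) * q * f ≤ k * p * f := by gcongr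
  have hrem' : ((n - k * (m * p) : ℕ) : ℝ) * f ≤ k * p * f := by gcongr
  linear_combination 2 * hrem' + hkA + 2 * hkq + 2 * hsq + 3 * hA' + 2 * hqf'

end Blocks

lemma tendsto_mul_sum_of_uniform_of_cesaro {f θ : ℕ → ℝ} {θn : ℕ → ℕ → ℝ} {τ γ : ℝ}
    (hf : Tendsto (fun n : ℕ => (n : ℝ) * f n) atTop (nhds τ))
    (hunif : ∀ ε : ℝ, 0 < ε → ∀ᶠ n : ℕ in atTop, ∀ i : ℕ, 1 ≤ i → i ≤ n → |θ i - θn i n| < ε)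
    (hces : Tendsto (fun n : ℕ => (n : ℝ)⁻¹ * ∑ i ∈ Icc 1 n, θ i) atTop (nhds γ)) :
    Tendsto (fun n : ℕ => f n * ∑ i ∈ Icc 1 n, θn i n) atTop (nhds (τ * γ)) := by
  have hdiff : Tendsto (fun n : ℕ => (n : ℝ)⁻¹ * ∑ i ∈ Icc 1 n, (θn i n - θ i)) atTop (nhds 0) := by
    refine Metric.tendsto_nhds.2 fun ε hε => ?_
    filter_upwards [hunif (ε / 2) (half_pos hε), eventually_ge_atTop 1] with n hn hn₁
    have hn₀ : (0 : ℝ) < n := by exact_mod_cast hn₁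
    rw [Real.dist_eq, sub_zero, abs_mul, abs_inv, abs_of_pos hn₀, inv_mul_lt_iff₀ hn₀]
    calc |∑ i ∈ Icc 1 n, (θn i n - θ i)| ≤ ∑ i ∈ Icc 1 n, |θn i n - θ i| := abs_sum_le_sum_abs _ _
      _ ≤ n * (ε / 2) := by
        simpa using Finset.sum_le_card_nsmul _ _ (ε / 2) fun i hi =>
          (abs_sub_comm _ _).trans_le (hn i (Finset.mem_Icc.1 hi).1 (Finset.mem_Icc.1 hi).2).le
      _ < n * ε := by gcongr; linarith
  have := hf.mul (hces.add hdiff)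
  rw [add_zero] at this
  refine this.congr' ?_
  filter_upwards [eventually_ge_atTop 1] with n hn
  have hn₀ : (n : ℝ) ≠ 0 := by positivity
  rw [← mul_add, ← Finset.sum_add_distrib]
  simp only [add_sub_cancel]
  field_simp

lemma tendsto_of_forall_eventually_abs_sub_le {a b : ℕ → ℝ} {L C : ℝ}
    (hb : Tendsto b atTop (nhds L))
    (h : ∀ᶠ k : ℕ in atTop, ∃ e : ℕ → ℝ, Tendsto e atTop (nhds (C / k)) ∧
      ∀ᶠ n in atTop, |a n - b n| ≤ e n) :
    Tendsto a atTop (nhds L) := by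
  refine Metric.tendsto_nhds.2 fun ε hε => ?_
  obtain ⟨k, hk, e, he, hae⟩ := ((tendsto_const_div_atTop_nhds_zero_nat C).eventually
    (gt_mem_nhds (show (0 : ℝ) < ε / 3 by positivity))).and h |>.exists
  filter_upwards [hae, he.eventually (gt_mem_nhds (show C / k < C / k + ε / 3 by linarith)),
    Metric.tendsto_nhds.1 hb (ε / 3) (by positivity)] with n hn hen hbn
  rw [Real.dist_eq] at hbn ⊢
  calc |a n - L| ≤ |a n - b n| + |b n - L| := abs_sub_le _ _ _
    _ < ε := by linarith

lemma tendsto_error_bound {f α : ℕ → ℝ} {p q : ℕ → ℕ} {τ : ℝ} (k : ℕ)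
    (hf : Tendsto (fun n : ℕ => (n : ℝ) * f n) atTop (nhds τ))
    (hp : (fun n : ℕ => (p n : ℝ)) =o[atTop] (fun n : ℕ => (n : ℝ)))
    (hnα : (fun n : ℕ => (n : ℝ) * α n) =o[atTop] (fun n : ℕ => (p n : ℝ)))
    (hqp : (fun n : ℕ => (q n : ℝ)) =o[atTop] (fun n : ℕ => (p n : ℝ))) :
    Tendsto (fun n : ℕ => 5 * k * p n * f n + 3 * n * |α n| / p n + 2 * q n * n * f n / p n +
      2 * (n * f n) ^ 2 / k) atTop (nhds (2 * τ ^ 2 / k)) := by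
  have h₁ : Tendsto (fun n : ℕ => 5 * k * p n * f n) atTop (nhds 0) := by
    have := (hp.tendsto_div_nhds_zero.mul hf).const_mul (5 * k : ℝ)
    rw [zero_mul, mul_zero] at this
    refine this.congr' ?_
    filter_upwards [eventually_ge_atTop 1] with n hn
    have hn₀ : (n : ℝ) ≠ 0 := by positivity
    field_simp
  have h₂ : Tendsto (fun n : ℕ => 3 * n * |α n| / p n) atTop (nhds 0) := by
    have := hnα.tendsto_div_nhds_zero.abs.const_mul 3
    rw [abs_zero, mul_zero] at this
    refine this.congr fun n => ?_
    rw [abs_div, abs_mul, Nat.abs_cast, Nat.abs_cast]; ring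
  have h₃ : Tendsto (fun n : ℕ => 2 * q n * n * f n / p n) atTop (nhds 0) := by
    have := (hqp.tendsto_div_nhds_zero.mul hf).const_mul 2
    rw [zero_mul, mul_zero] at this
    exact this.congr fun n => by ring
  have h₄ : Tendsto (fun n : ℕ => 2 * (n * f n) ^ 2 / k) atTop (nhds (2 * τ ^ 2 / k)) :=
    ((hf.pow 2).const_mul 2).div_const _
  simpa using ((h₁.add h₂).add h₃).add h₄

lemma eventually_block_conditions {f : ℕ → ℝ} {p q : ℕ → ℕ} {τ : ℝ} (hq : ∀ n, 1 ≤ q n)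
    (hf : Tendsto (fun n : ℕ => (n : ℝ) * f n) atTop (nhds τ))
    (hp : (fun n : ℕ => (p n : ℝ)) =o[atTop] (fun n : ℕ => (n : ℝ)))
    (hqp : (fun n : ℕ => (q n : ℝ)) =o[atTop] (fun n : ℕ => (p n : ℝ))) {k : ℕ} (hk : 1 ≤ k)
    (hτk : τ < k) :
    ∀ᶠ n : ℕ in atTop, 2 * q n + 1 ≤ p n ∧ k * p n ≤ n ∧ n * f n ≤ k := by
  have hk₀ : (0 : ℝ) < k := by exact_mod_cast hk
  filter_upwards [hqp.def (show (0 : ℝ) < 1 / 4 by norm_num), hp.def (inv_pos.2 hk₀),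
    hf.eventually_lt_const hτk] with n hqn hpn hfn
  simp only [Real.norm_natCast] at hqn hpn
  refine ⟨?_, ?_, hfn.le⟩
  · have : 4 * q n ≤ p n := by exact_mod_cast (by linarith : (4 * q n : ℝ) ≤ p n)
    have := hq n
    omega
  · exact_mod_cast (by rwa [← le_div_iff₀' hk₀, div_eq_inv_mul] : (k * p n : ℝ) ≤ n)

theorem stmt5_general {Ω : Type*} [MeasurableSpace Ω] (P : Measure Ω) [IsProbabilityMeasure P]
    (X : ℕ → Ω → ℝ) (F : ℝ → ℝ) (xs : ℕ → ℝ) (q : ℕ → ℕ) (α : ℕ → ℝ) (p : ℕ → ℕ)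
    (τ : ℝ)
    (hmeas : ∀ i, Measurable (X i))
    (hF : ∀ i, 1 ≤ i → ∀ t : ℝ, pr P {ω | X i ω ≤ t} = F t)
    (hFbarpos : ∀ n, 0 < 1 - F (xs n))
    (hqpos : ∀ m, 1 ≤ q m)
    (hbd : AIMBound P X xs q α)
    (hFbar : Tendsto (fun n : ℕ => (n : ℝ) * (1 - F (xs n))) atTop (nhds τ))
    (hp : (fun n : ℕ => (p n : ℝ)) =o[atTop] (fun n : ℕ => (n : ℝ)))
    (hnα : (fun n : ℕ => (n : ℝ) * α n) =o[atTop] (fun n : ℕ => (p n : ℝ)))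
    (hqp : (fun n : ℕ => (q n : ℝ)) =o[atTop] (fun n : ℕ => (p n : ℝ)))
    (θin : ℕ → ℕ → ℝ)
    (hθin : ∀ i n : ℕ, θin i n =
      pr P ({ω | xs n < X i ω} ∩ allLe X (Set.Icc (i + 1) (i + p n)) (xs n)) /
        pr P {ω | xs n < X i ω})
    (θ : ℕ → ℝ)
    (hunif : ∀ ε : ℝ, 0 < ε → ∀ᶠ n : ℕ in atTop,
      ∀ i : ℕ, 1 ≤ i → i ≤ n → |θ i - θin i n| < ε)
    (γ : ℝ)
    (hcesaro : Tendsto (fun n : ℕ => (n : ℝ)⁻¹ * ∑ i ∈ Finset.Icc 1 n, θ i)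
      atTop (nhds γ)) :
    Tendsto (fun n => pr P (allLe X (Set.Icc 1 n) (xs n))) atTop
      (nhds (Real.exp (-(τ * γ)))) := by
  set f : ℕ → ℝ := fun n => 1 - F (xs n)
  have htail : ∀ n i, 1 ≤ i → P.real {ω | xs n < X i ω} = f n := fun n i hi => by
    rw [show {ω | xs n < X i ω} = {ω | X i ω ≤ xs n}ᶜ by ext; simp,
      measureReal_compl (measurableSet_le (hmeas i) measurable_const), probReal_univ,
      ← pr_eq_measureReal, hF i hi]
  have hsum : ∀ n, ∑ i ∈ Icc 1 n, lastExceedProb P X (xs n) i (i + p n) =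
      f n * ∑ i ∈ Icc 1 n, θin i n := fun n => by
    rw [Finset.mul_sum]
    refine Finset.sum_congr rfl fun i hi => ?_
    rw [hθin, pr_eq_measureReal, pr_eq_measureReal, htail n i (Finset.mem_Icc.1 hi).1,
      mul_div_cancel₀ _ (hFbarpos n).ne', lastExceedProb]
  have hexp : Tendsto (fun n => Real.exp (-∑ i ∈ Icc 1 n, lastExceedProb P X (xs n) i (i + p n)))
      atTop (nhds (Real.exp (-(τ * γ)))) := by
    simp_rw [hsum]
    exact (Real.continuous_exp.tendsto _).comp
      (tendsto_mul_sum_of_uniform_of_cesaro hFbar hunif hcesaro).neg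
  refine tendsto_of_forall_eventually_abs_sub_le (C := 2 * τ ^ 2) hexp ?_
  filter_upwards [eventually_ge_atTop 1, tendsto_natCast_atTop_atTop.eventually_gt_atTop τ]
    with k hk hτk
  refine ⟨_, tendsto_error_bound k hFbar hp hnα hqp, ?_⟩
  filter_upwards [eventually_block_conditions hqpos hFbar hp hqp hk hτk] with n ⟨hpq, hkn, hnf⟩
  exact abs_measureReal_allLe_sub_exp_le hmeas (fun i hi => (htail n i hi).le) (hbd.aimAt n)
    (abs_nonneg _) (hqpos n) hpq hk hkn hnf

/-- Theorem UniformConvThm, first part: under AIM(xₙ) with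
`n·F̄(xₙ) → τ > 0`, `F̄(xₙ) > 0`, block lengths `pₙ` with `pₙ = o(n)`, `n·αₙ = o(pₙ)`,
`qₙ = o(pₙ)`, with `θ_{i,n} = P(M_{i,i+pₙ} ≤ xₙ | X_i > xₙ) → θ_i` pointwise,
`max_{1≤i≤n} |θ_i − θ_{i,n}| → 0`, and Cesàro means of `(θ_i)` converging to `γ`,
we have `P(Mₙ ≤ xₙ) → e^{−τγ}`. -/
theorem stmt5 {Ω : Type*} [MeasurableSpace Ω] (P : Measure Ω) [IsProbabilityMeasure P]
    (X : ℕ → Ω → ℝ) (F : ℝ → ℝ) (xs : ℕ → ℝ) (q : ℕ → ℕ) (α : ℕ → ℝ) (p : ℕ → ℕ)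
    (τ : ℝ) (hτ : 0 < τ)
    (hmeas : ∀ i, Measurable (X i))
    (hF : ∀ i, 1 ≤ i → ∀ t : ℝ, pr P {ω | X i ω ≤ t} = F t)
    (hFbarpos : ∀ n, 0 < 1 - F (xs n))
    (hqpos : ∀ m, 1 ≤ q m)
    (hq : (fun n : ℕ => (q n : ℝ)) =o[atTop] (fun n : ℕ => (n : ℝ)))
    (hα : Tendsto α atTop (nhds 0))
    (hbd : AIMBound P X xs q α)
    (hFbar : Tendsto (fun n : ℕ => (n : ℝ) * (1 - F (xs n))) atTop (nhds τ))
    (hppos : ∀ m, 1 ≤ p m)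
    (hp : (fun n : ℕ => (p n : ℝ)) =o[atTop] (fun n : ℕ => (n : ℝ)))
    (hnα : (fun n : ℕ => (n : ℝ) * α n) =o[atTop] (fun n : ℕ => (p n : ℝ)))
    (hqp : (fun n : ℕ => (q n : ℝ)) =o[atTop] (fun n : ℕ => (p n : ℝ)))
    (θin : ℕ → ℕ → ℝ)
    (hθin : ∀ i n : ℕ, θin i n =
      pr P ({ω | xs n < X i ω} ∩ allLe X (Set.Icc (i + 1) (i + p n)) (xs n)) /
        pr P {ω | xs n < X i ω})
    (θ : ℕ → ℝ)
    (hθlim : ∀ i : ℕ, 1 ≤ i → Tendsto (fun n => θin i n) atTop (nhds (θ i)))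
    (hunif : ∀ ε : ℝ, 0 < ε → ∀ᶠ n : ℕ in atTop,
      ∀ i : ℕ, 1 ≤ i → i ≤ n → |θ i - θin i n| < ε)
    (γ : ℝ)
    (hcesaro : Tendsto (fun n : ℕ => (n : ℝ)⁻¹ * ∑ i ∈ Finset.Icc 1 n, θ i)
      atTop (nhds γ)) :
    Tendsto (fun n => pr P (allLe X (Set.Icc 1 n) (xs n))) atTop
      (nhds (Real.exp (-(τ * γ)))) :=
  stmt5_general P X F xs q α p τ hmeas hF hFbarpos hqpos hbd hFbar hp hnα hqp θin hθin θ hunif γ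
    hcesaro
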